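/- arXiv:math/0411387 — 3 statements merged into one kernel-verified Lean document; each statement's English description precedes it below -/
import Mathlib

section
/- If w is a word of length n with pairwise distinct letters, then Park(w) equals the standardization Std(w) of w, i.e. the permutation word whose i-th letter is #{ j : w_j ≤ w_i }. -/
open List

/-- `sortW w` is the nondecreasing rearrangement `w↑` of the word `w`. -/
def sortW (w : List ℕ) : List ℕ := w.mergeSort (fun a b => decide (a ≤ b))

/-- `a` is a parking function: a word over the positive integers whose
nondecreasing rearrangement `a↑ = a'₁ ⋯ a'ₙ` satisfies `a'ᵢ ≤ i` for all `i`. -/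
def IsPF (a : List ℕ) : Prop :=
  (∀ x ∈ a, 1 ≤ x) ∧ ∀ i, i < a.length → (sortW a).getD i 0 ≤ i + 1

/-- `dW w = min { i ≥ 1 : #{j : wⱼ ≤ i} < i }`. -/
noncomputable def dW (w : List ℕ) : ℕ := sInf {i | 1 ≤ i ∧ w.countP (fun x => decide (x ≤ i)) < i}

/-- Decrement by one every letter strictly greater than `d`. -/
def decAbove (d : ℕ) (w : List ℕ) : List ℕ := w.map (fun x => if d < x then x - 1 else x)

lemma mem_dW_set (w : List ℕ) :
    (w.length + 1) ∈ {i | 1 ≤ i ∧ w.countP (fun x => decide (x ≤ i)) < i} := by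
  refine ⟨by omega, ?_⟩
  have : w.countP (fun x => decide (x ≤ w.length + 1)) ≤ w.length := List.countP_le_length
  omega

lemma decAbove_sum_lt {w : List ℕ} (h : dW w ≠ w.length + 1) :
    (decAbove (dW w) w).sum < w.sum := by
  have hmem : 1 ≤ dW w ∧ w.countP (fun x => decide (x ≤ dW w)) < dW w := Nat.sInf_mem (⟨_, mem_dW_set w⟩ : Set.Nonempty _)
  have hle : dW w ≤ w.length + 1 := Nat.sInf_le (mem_dW_set w)
  obtain ⟨h1, h2⟩ := hmem
  have hlen : dW w ≤ w.length := by omega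
  -- there is a letter strictly greater than `dW w`
  have hx : ∃ x ∈ w, ¬ (x ≤ dW w) := by
    by_contra hc
    push_neg at hc
    have : w.countP (fun x => decide (x ≤ dW w)) = w.length := by
      rw [List.countP_eq_length]
      intro a ha
      simpa using hc a ha
    omega
  obtain ⟨x, hxw, hxd⟩ := hx
  have := List.sum_lt_sum (l := w) (f := fun y => if dW w < y then y - 1 else y) (g := id)
    (fun i _ => by dsimp; split <;> omega)
    ⟨x, hxw, by dsimp; rw [if_pos (by omega)]; omega⟩
  simpa [decAbove] using this

/-- The parkization `Park(w)` of a word `w` over the positive integers. -/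
noncomputable def park (w : List ℕ) : List ℕ :=
  if h : dW w = w.length + 1 then w
  else
    have : (decAbove (dW w) w).sum < w.sum := decAbove_sum_lt h
    park (decAbove (dW w) w)
termination_by w.sum

/-- The standardization `Std(w)`: its `i`-th letter is `#{j : wⱼ ≤ wᵢ}`. -/
def stdW (w : List ℕ) : List ℕ := w.map (fun x => w.countP (fun y => decide (y ≤ x)))

/-- `v[k]`: shift every letter of `v` by `k`. -/
def shiftW (k : ℕ) (v : List ℕ) : List ℕ := v.map (· + k)

/-- Shifted concatenation `u • v = u · v[k]`, `k = |u|`. -/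
def sconc (u v : List ℕ) : List ℕ := u ++ shiftW u.length v

/-- The multiset of all shuffles of two words, counted with multiplicity. -/
def shuffles : List ℕ → List ℕ → Multiset (List ℕ)
  | [], v => {v}
  | x :: u, [] => {x :: u}
  | x :: u, y :: v =>
      (shuffles u (y :: v)).map (fun w => x :: w) + (shuffles (x :: u) v).map (fun w => y :: w)
termination_by u v => u.length + v.length

/-- Shifted shuffle `u ⋒ v`, a multiset of words. -/
def sshuffle (u v : List ℕ) : Multiset (List ℕ) := shuffles u (shiftW u.length v)

/-- Iterated shifted shuffle `u₁ ⋒ u₂ ⋒ ⋯ ⋒ u_r`. -/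
def itersShuffle : List (List ℕ) → Multiset (List ℕ)
  | [] => {[]}
  | u :: rest => (itersShuffle rest).bind (fun v => sshuffle u v)

/-- Lexicographic pair-encoding `a ⊛ b` of two words of length `n` with letters in `[n]`:
the `i`-th letter is `(aᵢ - 1)·n + bᵢ`. -/
def pairEnc (n : ℕ) (a b : List ℕ) : List ℕ := List.zipWith (fun x y => (x - 1) * n + y) a b

/-- The internal product `a * b := Park(a ⊛ b)` of two parking functions of the same length. -/
noncomputable def iprod (a b : List ℕ) : List ℕ := park (pairEnc a.length a b)

/-- The word `1^m` of length `m` with all letters equal to `1`. -/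
def onesW (m : ℕ) : List ℕ := List.replicate m 1

/-- The multiset (without repetition) of all words `a` with `a↑ = π`. -/
def classM (π : List ℕ) : Multiset (List ℕ) :=
  (↑(π.permutations.dedup) : Multiset (List ℕ)).filter (fun a => sortW a = π)

open Classical in
/-- The finite set of all parking functions of length `n`. -/
noncomputable def PFfin (n : ℕ) : Finset (List ℕ) :=
  ((Finset.univ : Finset (Fin n → Fin n)).image
    (fun f => List.ofFn (fun i => (f i : ℕ) + 1))).filter IsPF

/-- Split a word into consecutive factors of the given lengths. -/
def splitFactors : List ℕ → List ℕ → List (List ℕ)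
  | [], _ => []
  | k :: ks, e => e.take k :: splitFactors ks (e.drop k)

/-- Iterated shifted concatenation. -/
def sconcAll : List (List ℕ) → List ℕ
  | [] => []
  | u :: rest => sconc u (sconcAll rest)

/-- Multiset of tuples `(a₁, …, a_r)` (as lists) with `aᵢ↑ = πᵢ`. -/
def tuplesM : List (List ℕ) → Multiset (List (List ℕ))
  | [] => {[]}
  | p :: ps => (classM p).bind (fun a => (tuplesM ps).map (fun A => a :: A))

/-- `π'` is a successor of `π`: the evaluation of `π'` is obtained from that of `π`
by merging two consecutive (modulo zeros) nonzero entries onto the left one. -/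
def IsSuccEv (π π' : List ℕ) : Prop :=
  ∃ i j : ℕ, 1 ≤ i ∧ i < j ∧ π.count i ≠ 0 ∧ π.count j ≠ 0 ∧
    (∀ k, i < k → k < j → π.count k = 0) ∧
    (∀ m, π'.count m = if m = i then π.count i + π.count j else if m = j then 0 else π.count m)

/-- The partial order `π ⪯ π'`: reflexive–transitive closure of the successor relation. -/
def succeq (π π' : List ℕ) : Prop := Relation.ReflTransGen IsSuccEv π π'

/-! In any word, minimality of `d = d(w)` gives `#{≤ d - 1} ≥ d - 1` while `#{≤ d} < d`, so `d` is
never a letter. Decrementing the letters above `d` is therefore strictly increasing on the letters: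
it keeps distinct letters distinct and does not change the standardization, and the letter sum
drops. A word with distinct positive letters has at most `i` letters `≤ i`, so when `d(w) = n + 1`
every count `#{≤ i}` equals `i`: `w` is a permutation of `[n]` and is its own standardization. -/

lemma countP_le_succ_eq_add_count (l : List ℕ) (d : ℕ) :
    l.countP (fun x => decide (x ≤ d + 1)) = l.countP (fun x => decide (x ≤ d)) + l.count (d + 1) := by
  induction l with
  | nil => simp
  | cons a l ih =>
    simp only [countP_cons, count_cons, ih, decide_eq_true_eq, beq_iff_eq]
    grind

lemma countP_le_of_nodup {l : List ℕ} (hl : ∀ x ∈ l, 1 ≤ x) (hnd : l.Nodup) (i : ℕ) :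
    l.countP (fun x => decide (x ≤ i)) ≤ i := by
  rw [countP_eq_length_filter, ← toFinset_card_of_nodup (hnd.filter _)]
  calc (l.filter (fun x => decide (x ≤ i))).toFinset.card
      ≤ (Finset.Icc 1 i).card := Finset.card_le_card fun x hx => by
        simp only [mem_toFinset, mem_filter, decide_eq_true_eq] at hx
        exact Finset.mem_Icc.2 ⟨hl x hx.1, hx.2⟩
    _ = i := by simp

lemma one_le_dW (w : List ℕ) : 1 ≤ dW w :=
  (Nat.sInf_mem (⟨_, mem_dW_set w⟩ : Set.Nonempty _)).1

lemma countP_le_dW_lt_dW (w : List ℕ) : w.countP (fun x => decide (x ≤ dW w)) < dW w :=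
  (Nat.sInf_mem (⟨_, mem_dW_set w⟩ : Set.Nonempty _)).2

lemma le_countP_of_lt_dW {w : List ℕ} {i : ℕ} (hi : 1 ≤ i) (hid : i < dW w) :
    i ≤ w.countP (fun x => decide (x ≤ i)) := by
  by_contra h
  exact Nat.notMem_of_lt_sInf hid ⟨hi, by omega⟩

lemma dW_notMem (w : List ℕ) : dW w ∉ w := by
  obtain ⟨e, he⟩ : ∃ e, dW w = e + 1 := Nat.exists_eq_add_one.2 (one_le_dW w)
  have hbelow : e ≤ w.countP (fun x => decide (x ≤ e)) := by
    rcases Nat.eq_zero_or_pos e with rfl | hpos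
    · exact Nat.zero_le _
    · exact le_countP_of_lt_dW hpos (by omega)
  have hsplit := countP_le_succ_eq_add_count w e
  have hlt := countP_le_dW_lt_dW w
  rw [he] at hlt ⊢
  rw [← count_eq_zero]
  omega

lemma stdW_map_of_strictMonoOn {w : List ℕ} {f : ℕ → ℕ} (hf : StrictMonoOn f {x | x ∈ w}) :
    stdW (w.map f) = stdW w := by
  simp only [stdW, map_map]
  refine map_congr_left fun x hx => ?_
  rw [Function.comp_apply, countP_map]
  exact countP_congr fun y hy => by simp [Function.comp_apply, hf.le_iff_le hy hx]

lemma stdW_eq_self_of_dW_eq {w : List ℕ} (hw : ∀ x ∈ w, 1 ≤ x) (hnd : w.Nodup)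
    (h : dW w = w.length + 1) : stdW w = w := by
  have hcount : ∀ i, 1 ≤ i → i ≤ w.length → w.countP (fun x => decide (x ≤ i)) = i :=
    fun i hi hin => le_antisymm (countP_le_of_nodup hw hnd i) (le_countP_of_lt_dW hi (by omega))
  have hlen : ∀ x ∈ w, x ≤ w.length := by
    rcases Nat.eq_zero_or_pos w.length with h0 | h0
    · simp [length_eq_zero_iff.1 h0]
    · simpa using countP_eq_length.1 (hcount w.length h0 le_rfl)
  conv_rhs => rw [← map_id w]
  exact map_congr_left fun x hx => hcount x (hw x hx) (hlen x hx)

lemma decAbove_strictMonoOn (d : ℕ) : StrictMonoOn (fun x => if d < x then x - 1 else x) {d}ᶜ := by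
  intro x hx y hy hxy
  simp only [Set.mem_compl_iff, Set.mem_singleton_iff] at hx hy
  dsimp only
  split_ifs <;> omega

lemma one_le_of_mem_decAbove {w : List ℕ} {d : ℕ} (hd : 1 ≤ d) (hw : ∀ x ∈ w, 1 ≤ x) :
    ∀ x ∈ decAbove d w, 1 ≤ x := by
  simp only [decAbove, mem_map, forall_exists_index, and_imp, forall_apply_eq_imp_iff₂]
  intro x hx
  have := hw x hx
  split_ifs <;> omega

lemma park_of_dW_eq {w : List ℕ} (h : dW w = w.length + 1) : park w = w := by
  rw [park, dif_pos h]

lemma park_of_dW_ne {w : List ℕ} (h : dW w ≠ w.length + 1) :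
    park w = park (decAbove (dW w) w) := by
  rw [park, dif_neg h]

/-- If `w` is a word with pairwise distinct letters, then `Park(w)` equals
the standardization `Std(w)`, whose `i`-th letter is `#{j : wⱼ ≤ wᵢ}`. -/
theorem park_eq_std_of_nodup (w : List ℕ) (hw : ∀ x ∈ w, 1 ≤ x) (hnd : w.Nodup) :
    park w = stdW w := by
  by_cases h : dW w = w.length + 1
  · rw [park_of_dW_eq h, stdW_eq_self_of_dW_eq hw hnd h]
  · have hmono : StrictMonoOn (fun x => if dW w < x then x - 1 else x) {x | x ∈ w} :=
      (decAbove_strictMonoOn (dW w)).mono fun x hx hxd => dW_notMem w (hxd ▸ hx)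
    have := decAbove_sum_lt h
    rw [park_of_dW_ne h,
      park_eq_std_of_nodup _ (one_le_of_mem_decAbove (one_le_dW w) hw) (hnd.map_on fun _ hx _ hy =>
        hmono.injOn hx hy), decAbove, stdW_map_of_strictMonoOn hmono]
termination_by w.sum
end

section
/- If a is a parking function of length k and b is a parking function of length l, then the shifted concatenation a • b is a parking function of length k+l, and every word occurring in the shifted shuffle a ⋒ b is a parking function of length k+l. -/
open List

/-
The letters of a parking function of length `k` are at most `k`, whereas those of `b[k]` exceed `k`.
Hence sorting `a • b` sorts the two blocks separately, `(a • b)↑ = a↑ · b↑[k]`, and the parking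
conditions for `a • b` are those of `a` followed by those of `b` shifted by `k`. Every shuffle of
`a` and `b[k]` is a rearrangement of `a • b`, and being a parking function only depends on `w↑`.
-/

lemma sortW_perm (w : List ℕ) : sortW w ~ w := mergeSort_perm w _

lemma length_sortW (w : List ℕ) : (sortW w).length = w.length := length_mergeSort w

lemma sortW_sorted (w : List ℕ) : Pairwise (· ≤ ·) (sortW w) := by
  have := pairwise_mergeSort (le := fun a b : ℕ => decide (a ≤ b))
    (fun a b c => by simp; omega) (fun a b => by simp; omega) w
  simpa [sortW] using this.imp (by simp)

lemma mem_sortW {w : List ℕ} {x : ℕ} : x ∈ sortW w ↔ x ∈ w := (sortW_perm w).mem_iff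

lemma sortW_eq_of_sorted_perm {v w : List ℕ} (hv : Pairwise (· ≤ ·) v) (h : v ~ w) :
    sortW w = v :=
  (sortW_perm w).trans h.symm |>.eq_of_pairwise' (sortW_sorted w) hv

lemma sortW_eq_of_perm {v w : List ℕ} (h : v ~ w) : sortW v = sortW w :=
  sortW_eq_of_sorted_perm (sortW_sorted w) ((sortW_perm w).trans h.symm)

lemma sortW_append_of_le {u v : List ℕ} (h : ∀ x ∈ u, ∀ y ∈ v, x ≤ y) :
    sortW (u ++ v) = sortW u ++ sortW v := by
  refine sortW_eq_of_sorted_perm ?_ ((sortW_perm u).append (sortW_perm v))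
  exact pairwise_append.2 ⟨sortW_sorted u, sortW_sorted v,
    fun x hx y hy => h x (mem_sortW.1 hx) y (mem_sortW.1 hy)⟩

lemma sortW_shiftW (k : ℕ) (v : List ℕ) : sortW (shiftW k v) = shiftW k (sortW v) :=
  sortW_eq_of_sorted_perm ((sortW_sorted v).map _ fun _ _ h => by omega) ((sortW_perm v).map _)

lemma length_shiftW (k : ℕ) (v : List ℕ) : (shiftW k v).length = v.length := length_map _

lemma length_sconc (u v : List ℕ) : (sconc u v).length = u.length + v.length := by
  simp [sconc, length_shiftW]

lemma perm_append_of_mem_shuffles {u v c : List ℕ} (hc : c ∈ shuffles u v) : c ~ u ++ v := by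
  induction u, v using shuffles.induct generalizing c with
  | case1 v => simp_all [shuffles]
  | case2 x u => simp_all [shuffles]
  | case3 x u y v ih₁ ih₂ =>
    rw [shuffles, Multiset.mem_add, Multiset.mem_map, Multiset.mem_map] at hc
    rcases hc with ⟨w, hw, rfl⟩ | ⟨w, hw, rfl⟩
    · exact (ih₁ hw).cons x
    · exact ((ih₂ hw).cons y).trans perm_middle.symm

namespace IsPF

lemma of_perm {v w : List ℕ} (h : v ~ w) (hw : IsPF w) : IsPF v :=
  ⟨fun x hx => hw.1 x (h.mem_iff.1 hx), fun i hi => sortW_eq_of_perm h ▸ hw.2 i (h.length_eq ▸ hi)⟩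

lemma le_length {a : List ℕ} (ha : IsPF a) {x : ℕ} (hx : x ∈ a) : x ≤ a.length := by
  obtain ⟨i, hi, rfl⟩ := getElem_of_mem (mem_sortW.2 hx)
  have := ha.2 i (length_sortW a ▸ hi)
  rw [getD_eq_getElem _ _ hi] at this
  rw [length_sortW] at hi
  omega

lemma sortW_sconc {a b : List ℕ} (ha : IsPF a) (hb : IsPF b) :
    sortW (_root_.sconc a b) = sortW a ++ shiftW a.length (sortW b) := by
  rw [_root_.sconc, sortW_append_of_le, sortW_shiftW]
  intro x hx y hy
  obtain ⟨z, hz, rfl⟩ := mem_map.1 hy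
  have hxa := ha.le_length hx
  have hz1 := hb.1 z hz
  omega

lemma sconc {a b : List ℕ} (ha : IsPF a) (hb : IsPF b) : IsPF (_root_.sconc a b) := by
  refine ⟨fun x hx => ?_, fun i hi => ?_⟩
  · rcases mem_append.1 hx with hx | hx
    · exact ha.1 x hx
    · obtain ⟨z, hz, rfl⟩ := mem_map.1 hx
      exact le_add_right (hb.1 z hz)
  rw [ha.sortW_sconc hb]
  rcases lt_or_ge i a.length with h | h
  · rw [getD_append _ _ _ _ (by rwa [length_sortW])]
    exact ha.2 i h
  · rw [getD_append_right _ _ _ _ (by rwa [length_sortW]), length_sortW]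
    have hib : i - a.length < b.length := by rw [length_sconc] at hi; omega
    have := hb.2 _ hib
    rw [← length_sortW b] at hib
    rw [getD_eq_getElem _ _ hib] at this
    rw [getD_eq_getElem _ _ (by rwa [length_shiftW])]
    simp only [shiftW, getElem_map]
    omega

end IsPF

/-- If `a ∈ PF_k` and `b ∈ PF_l`, then the shifted concatenation `a • b`
is a parking function of length `k + l`, and every word occurring in the shifted
shuffle `a ⋒ b` is a parking function of length `k + l`. -/
theorem sconc_sshuffle_parking (a b : List ℕ) (ha : IsPF a) (hb : IsPF b) :
    (IsPF (sconc a b) ∧ (sconc a b).length = a.length + b.length) ∧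
    (∀ c ∈ sshuffle a b, IsPF c ∧ c.length = a.length + b.length) := by
  refine ⟨⟨ha.sconc hb, length_sconc a b⟩, fun c hc => ?_⟩
  have hperm : c ~ sconc a b := perm_append_of_mem_shuffles hc
  exact ⟨(ha.sconc hb).of_perm hperm, hperm.length_eq.trans (length_sconc a b)⟩
end

section
/- Let a and b be parking functions of length n. Then a↑ = b↑ if and only if for every finitely supported function m from the positive integers to ℕ, the number of words w with Park(w) = a and evaluation Ev(w) = m equals the number of words w with Park(w) = b and Ev(w) = m. (This expresses that the commutative images of the polynomials G_a and G_b coincide exactly when a and b have the same nondecreasing rearrangement.) -/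
open List

lemma sortW_eq_sortW_iff {u v : List ℕ} : sortW u = sortW v ↔ u ~ v := by
  change Multiset.sort (u : Multiset ℕ) = Multiset.sort (v : Multiset ℕ) ↔ u ~ v
  rw [← Multiset.coe_eq_coe]
  refine ⟨fun h => ?_, fun h => h ▸ rfl⟩
  rw [← Multiset.sort_eq (u : Multiset ℕ) (· ≤ ·), h, Multiset.sort_eq]

lemma IsPF.of_perm_s14 {u a : List ℕ} (h : u ~ a) (ha : IsPF a) : IsPF u := by
  refine ⟨fun x hx => ha.1 x (h.mem_iff.1 hx), fun i hi => ?_⟩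
  rw [sortW_eq_sortW_iff.2 h]
  exact ha.2 i (h.length_eq ▸ hi)

lemma IsPF.le_countP {a : List ℕ} (ha : IsPF a) {i : ℕ} (hi : i ≤ a.length) :
    i ≤ a.countP (· ≤ i) := by
  have hs := sortW_perm a
  have htake : ((sortW a).take i).countP (· ≤ i) = i := by
    rw [countP_eq_length.2, length_take, hs.length_eq, min_eq_left hi]
    intro x hx
    obtain ⟨j, hj, rfl⟩ := mem_iff_getElem.1 hx
    rw [length_take] at hj
    have hja := ha.2 j (by omega)
    rw [getD_eq_getElem _ _ (by omega)] at hja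
    simp only [getElem_take, decide_eq_true_eq]
    omega
  calc i = ((sortW a).take i).countP (· ≤ i) := htake.symm
    _ ≤ (sortW a).countP (· ≤ i) := (take_sublist _ _).countP_le
    _ = a.countP (· ≤ i) := hs.countP_eq _

lemma IsPF.dW_eq {a : List ℕ} (ha : IsPF a) : dW a = a.length + 1 := by
  refine le_antisymm (Nat.sInf_le (mem_dW_set a)) (le_csInf ⟨_, mem_dW_set a⟩ ?_)
  rintro i ⟨-, hi⟩
  by_contra! hia
  exact absurd (ha.le_countP (Nat.lt_succ_iff.1 hia)) (not_le.2 hi)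

lemma park_eq_ite (w : List ℕ) :
    park w = if dW w = w.length + 1 then w else park (decAbove (dW w) w) := by
  rw [park]
  split_ifs <;> rfl

lemma IsPF.park_eq {a : List ℕ} (ha : IsPF a) : park a = a := by
  rw [park_eq_ite, if_pos ha.dW_eq]

lemma dW_eq_of_perm {u v : List ℕ} (h : u ~ v) : dW u = dW v := by
  simp only [dW, h.countP_eq]

lemma length_park (w : List ℕ) : (park w).length = w.length := by
  rw [park_eq_ite]
  split_ifs with h
  · rfl
  · have := decAbove_sum_lt h
    rw [length_park, decAbove, length_map]
termination_by w.sum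

/-- Positions beyond `w.length` read as `0`; the lemmas below all assume `w.length = n`. -/
def reindex (n : ℕ) (σ : Equiv.Perm (Fin n)) (w : List ℕ) : List ℕ :=
  List.ofFn fun i => w.getD (σ i) 0

section Reindex

variable {n : ℕ}

lemma ofFn_getD {w : List ℕ} (hw : w.length = n) :
    List.ofFn (fun i : Fin n => w.getD i 0) = w := by
  subst hw
  conv_rhs => rw [← ofFn_getElem (xs := w)]
  exact congrArg List.ofFn (funext fun i => getD_eq_getElem _ _ i.isLt)

lemma length_reindex (σ : Equiv.Perm (Fin n)) (w : List ℕ) : (reindex n σ w).length = n :=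
  length_ofFn

lemma reindex_perm (σ : Equiv.Perm (Fin n)) {w : List ℕ} (hw : w.length = n) :
    reindex n σ w ~ w :=
  (σ.ofFn_comp_perm fun i : Fin n => w.getD i 0).trans (Perm.of_eq (ofFn_getD hw))

lemma reindex_reindex (σ τ : Equiv.Perm (Fin n)) (w : List ℕ) :
    reindex n σ (reindex n τ w) = reindex n (τ * σ) w := by
  simp [reindex]

lemma reindex_one {w : List ℕ} (hw : w.length = n) : reindex n 1 w = w :=
  ofFn_getD hw

lemma reindex_inv_reindex (σ : Equiv.Perm (Fin n)) {w : List ℕ} (hw : w.length = n) :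
    reindex n σ⁻¹ (reindex n σ w) = w := by
  rw [reindex_reindex, mul_inv_cancel, reindex_one hw]

lemma reindex_map (σ : Equiv.Perm (Fin n)) {w : List ℕ} (hw : w.length = n) (g : ℕ → ℕ) :
    reindex n σ (w.map g) = (reindex n σ w).map g := by
  simp only [reindex, map_ofFn]
  congr 1
  funext i
  have hi : (σ i : ℕ) < w.length := hw ▸ (σ i).isLt
  rw [getD_eq_getElem _ _ (by simpa using hi), Function.comp_apply, getD_eq_getElem _ _ hi,
    getElem_map]

lemma exists_reindex_of_perm {a b : List ℕ} (h : a ~ b) (ha : a.length = n) :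
    ∃ σ : Equiv.Perm (Fin n), b = reindex n σ a := by
  have hb : b.length = n := h.length_eq.symm.trans ha
  set f : Fin n → ℕ := fun i => a.getD i 0
  set g : Fin n → ℕ := fun i => b.getD i 0
  have hsorted : f ∘ Tuple.sort f = g ∘ Tuple.sort g := by
    refine List.ofFn_injective <| Perm.eq_of_sortedLE
      (sortedLE_ofFn_iff.2 (Tuple.monotone_sort f)) (sortedLE_ofFn_iff.2 (Tuple.monotone_sort g)) ?_
    calc List.ofFn (f ∘ Tuple.sort f) ~ List.ofFn f := (Tuple.sort f).ofFn_comp_perm f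
      _ = a := ofFn_getD ha
      _ ~ b := h
      _ = List.ofFn g := (ofFn_getD hb).symm
      _ ~ List.ofFn (g ∘ Tuple.sort g) := ((Tuple.sort g).ofFn_comp_perm g).symm
  refine ⟨Tuple.sort f * (Tuple.sort g)⁻¹, ?_⟩
  conv_lhs => rw [← ofFn_getD hb]
  refine congrArg List.ofFn (funext fun i => ?_)
  simpa [f, g] using (congrFun hsorted ((Tuple.sort g)⁻¹ i)).symm

lemma park_reindex (σ : Equiv.Perm (Fin n)) {w : List ℕ} (hw : w.length = n) :
    park (reindex n σ w) = reindex n σ (park w) := by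
  have hd : dW (reindex n σ w) = dW w := dW_eq_of_perm (reindex_perm σ hw)
  rw [park_eq_ite (reindex n σ w), park_eq_ite w, hd, length_reindex, hw]
  split_ifs with h
  · rfl
  · have := decAbove_sum_lt (w := w) (by omega)
    rw [decAbove, ← reindex_map σ hw, ← decAbove,
      park_reindex σ (by rw [decAbove, length_map, hw])]
termination_by w.sum

end Reindex

def parkFiber (a : List ℕ) (m : ℕ →₀ ℕ) : Set (List ℕ) :=
  {w | (∀ x ∈ w, 1 ≤ x) ∧ park w = a ∧ ∀ i, w.count i = m i}

lemma length_of_mem_parkFiber {a w : List ℕ} {m : ℕ →₀ ℕ} (hw : w ∈ parkFiber a m) :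
    w.length = a.length := by
  rw [← hw.2.1, length_park]

lemma reindex_mem_parkFiber {n : ℕ} (σ : Equiv.Perm (Fin n)) {a w : List ℕ} {m : ℕ →₀ ℕ}
    (ha : a.length = n) (hw : w ∈ parkFiber a m) :
    reindex n σ w ∈ parkFiber (reindex n σ a) m := by
  have hperm := reindex_perm σ ((length_of_mem_parkFiber hw).trans ha)
  obtain ⟨hpos, hpark, hcount⟩ := hw
  refine ⟨fun x hx => hpos x (hperm.mem_iff.1 hx), ?_, fun i => hperm.count_eq i ▸ hcount i⟩
  rw [park_reindex σ (by rw [← ha, ← hpark, length_park]), hpark]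

lemma ncard_parkFiber_reindex {n : ℕ} (σ : Equiv.Perm (Fin n)) {a : List ℕ} (ha : a.length = n)
    (m : ℕ →₀ ℕ) : (parkFiber a m).ncard = (parkFiber (reindex n σ a) m).ncard := by
  refine Set.ncard_congr (fun w _ => reindex n σ w) (fun w hw => reindex_mem_parkFiber σ ha hw)
    (fun u v hu hv huv => ?_) (fun w hw => ⟨reindex n σ⁻¹ w, ?_, ?_⟩)
  · rw [← reindex_inv_reindex σ ((length_of_mem_parkFiber hu).trans ha), huv,
      reindex_inv_reindex σ ((length_of_mem_parkFiber hv).trans ha)]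
  · simpa [reindex_inv_reindex σ ha] using reindex_mem_parkFiber σ⁻¹ (length_reindex σ a) hw
  · have hlen := (length_of_mem_parkFiber hw).trans (length_reindex σ a)
    simpa using reindex_inv_reindex σ⁻¹ hlen

lemma ncard_parkFiber_eq_of_perm {a b : List ℕ} (h : a ~ b) (m : ℕ →₀ ℕ) :
    (parkFiber a m).ncard = (parkFiber b m).ncard := by
  obtain ⟨σ, rfl⟩ := exists_reindex_of_perm h rfl
  exact ncard_parkFiber_reindex σ rfl m

lemma perm_of_mem_parkFiber_toFinsupp {a b w : List ℕ}
    (hw : w ∈ parkFiber b (Multiset.toFinsupp a)) : w ~ a :=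
  perm_iff_count.2 fun i => by simpa using hw.2.2 i

lemma IsPF.eq_of_mem_parkFiber_toFinsupp {a b w : List ℕ} (ha : IsPF a)
    (hw : w ∈ parkFiber b (Multiset.toFinsupp a)) : w = b := by
  rw [← hw.2.1, (ha.of_perm_s14 (perm_of_mem_parkFiber_toFinsupp hw)).park_eq]

lemma IsPF.parkFiber_toFinsupp_self {a : List ℕ} (ha : IsPF a) :
    parkFiber a (Multiset.toFinsupp a) = {a} :=
  Set.eq_singleton_iff_unique_mem.2
    ⟨⟨ha.1, ha.park_eq, fun i => by simp⟩, fun _ hw => ha.eq_of_mem_parkFiber_toFinsupp hw⟩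

theorem commutative_image_iff_general (a b : List ℕ) (ha : IsPF a) :
    sortW a = sortW b ↔
      ∀ m : ℕ →₀ ℕ,
        {w : List ℕ | (∀ x ∈ w, 1 ≤ x) ∧ park w = a ∧ ∀ i, w.count i = m i}.ncard =
        {w : List ℕ | (∀ x ∈ w, 1 ≤ x) ∧ park w = b ∧ ∀ i, w.count i = m i}.ncard := by
  rw [sortW_eq_sortW_iff]
  refine ⟨ncard_parkFiber_eq_of_perm, fun h => ?_⟩
  have hcard : (parkFiber b (Multiset.toFinsupp a)).ncard = 1 := by
    rw [← Set.ncard_singleton a, ← ha.parkFiber_toFinsupp_self]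
    exact (h _).symm
  obtain ⟨w, hw⟩ := Set.nonempty_of_ncard_ne_zero (hcard ▸ one_ne_zero)
  rw [← ha.eq_of_mem_parkFiber_toFinsupp hw]
  exact (perm_of_mem_parkFiber_toFinsupp hw).symm

/-- for `a, b ∈ PF_n`, `a↑ = b↑` iff for every finitely supported
`m : ℕ →₀ ℕ`, the number of words `w` with `Park(w) = a` and evaluation `m` equals
the number of words `w` with `Park(w) = b` and evaluation `m`. -/
theorem commutative_image_iff (n : ℕ) (a b : List ℕ) (ha : IsPF a) (hb : IsPF b)
    (hla : a.length = n) (hlb : b.length = n) :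
    sortW a = sortW b ↔
      ∀ m : ℕ →₀ ℕ,
        {w : List ℕ | (∀ x ∈ w, 1 ≤ x) ∧ park w = a ∧ ∀ i, w.count i = m i}.ncard =
        {w : List ℕ | (∀ x ∈ w, 1 ≤ x) ∧ park w = b ∧ ∀ i, w.count i = m i}.ncard :=
  commutative_image_iff_general a b ha
end
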